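/- Let n ≥ 1 and for U ∈ M_n(ℂ) set F(U) := tr((1 − U)(1 − U)†), where † denotes the conjugate transpose. Then for all skew-Hermitian matrices X, Y, Z ∈ M_n(ℂ), the iterated third derivative ∂³/∂s∂t∂u [ F(exp(uZ)·exp(sX)·exp(tY)) ] evaluated at s = t = u = 0 equals −tr((X·Y − Y·X)·Z). -/

import Mathlib

/-!
On unitary matrices the contrast function is affine in an `ℝ`-linear functional:
`F(V) = 2n - ℓ V` with `ℓ V = tr (V + Vᴴ)`. For `V = exp(uZ) exp(sX) exp(tY)`, each of the three
derivatives at `0` therefore just replaces one exponential by its generator, so the iterated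
derivative is `-ℓ (Z X Y)`; since `X, Y, Z` are skew-Hermitian, `(Z X Y)ᴴ = -Y X Z`, and cycling
the trace gives `-tr ((X Y - Y X) Z)`.
-/

open Matrix NormedSpace

namespace Matrix

variable {m 𝕜 : Type*} [Fintype m] [RCLike 𝕜]

def traceAddConjTranspose : Matrix m m 𝕜 →ₗ[ℝ] 𝕜 where
  toFun M := trace (M + Mᴴ)
  map_add' M N := by rw [conjTranspose_add, add_add_add_comm, trace_add]
  map_smul' r M := by simp [conjTranspose_smul, trace_add, trace_smul, smul_add]

theorem traceAddConjTranspose_apply (M : Matrix m m 𝕜) :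
    traceAddConjTranspose M = trace (M + Mᴴ) := rfl

theorem traceAddConjTranspose_mul_mul {X Y Z : Matrix m m 𝕜} (hX : Xᴴ = -X) (hY : Yᴴ = -Y)
    (hZ : Zᴴ = -Z) : traceAddConjTranspose (Z * X * Y) = trace ((X * Y - Y * X) * Z) := by
  rw [traceAddConjTranspose_apply, conjTranspose_mul, conjTranspose_mul, hX, hY, hZ,
    neg_mul_neg, neg_mul, trace_add, trace_neg, sub_mul, trace_sub, trace_mul_cycle X, mul_assoc Y]
  ring

variable [DecidableEq m]

theorem exp_mem_unitary_of_mem_skewAdjoint {W : Matrix m m 𝕜}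
    (hW : W ∈ skewAdjoint (Matrix m m 𝕜)) : exp W ∈ unitary (Matrix m m 𝕜) := by
  rw [(isUnit_exp W).mem_unitary_iff_star_mul_self, star_eq_conjTranspose, ← exp_conjTranspose,
    ← star_eq_conjTranspose, skewAdjoint.mem_iff.mp hW, exp_neg,
    nonsing_inv_mul _ ((isUnit_iff_isUnit_det _).mp (isUnit_exp W))]

theorem trace_one_sub_mul_conjTranspose_one_sub {V : Matrix m m 𝕜}
    (hV : V ∈ unitary (Matrix m m 𝕜)) :
    trace ((1 - V) * (1 - V)ᴴ) = 2 * Fintype.card m - traceAddConjTranspose V := by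
  have hVV : V * Vᴴ = 1 := Unitary.mul_star_self_of_mem hV
  rw [traceAddConjTranspose_apply, conjTranspose_sub, conjTranspose_one, sub_mul, mul_sub,
    mul_sub, hVV]
  simp only [one_mul, mul_one, trace_sub, trace_add, trace_one]
  ring

theorem hasDerivAt_mul_exp_smul_mul {E : Type*} [NormedAddCommGroup E] [NormedSpace ℝ E]
    (ℓ : Matrix m m 𝕜 →ₗ[ℝ] E) (A W B : Matrix m m 𝕜) :
    HasDerivAt (fun u : ℝ => ℓ (A * exp (u • W) * B)) (ℓ (A * W * B)) 0 := by
  -- Matrices carry no global norm; the `L∞` operator norm induces their product topology.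
  let _ : NormedRing (Matrix m m 𝕜) := Matrix.linftyOpNormedRing
  let _ : NormedAlgebra ℝ (Matrix m m 𝕜) := Matrix.linftyOpNormedAlgebra
  have hexp := hasDerivAt_exp_smul_const (𝕂 := ℝ) W 0
  rw [zero_smul, exp_zero, one_mul] at hexp
  exact (LinearMap.toContinuousLinearMap ℓ).hasFDerivAt.comp_hasDerivAt 0
    ((hexp.const_mul A).mul_const B)

end Matrix

theorem contrast_unitary_connection_general (n : ℕ)
    (X Y Z : Matrix (Fin n) (Fin n) ℂ) (hX : Xᴴ = -X) (hY : Yᴴ = -Y) (hZ : Zᴴ = -Z) :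
    deriv (fun s : ℝ => deriv (fun t : ℝ => deriv (fun u : ℝ =>
        Matrix.trace
          ((1 - NormedSpace.exp (u • Z) * NormedSpace.exp (s • X) *
              NormedSpace.exp (t • Y)) *
            (1 - NormedSpace.exp (u • Z) * NormedSpace.exp (s • X) *
              NormedSpace.exp (t • Y))ᴴ)) 0) 0) 0
      = -Matrix.trace ((X * Y - Y * X) * Z) := by
  have hexp {W : Matrix (Fin n) (Fin n) ℂ} (hW : Wᴴ = -W) (r : ℝ) :=
    exp_mem_unitary_of_mem_skewAdjoint (skewAdjoint.smul_mem r (skewAdjoint.mem_iff.mpr hW))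
  simp only [trace_one_sub_mul_conjTranspose_one_sub
    (mul_mem (mul_mem (hexp hZ _) (hexp hX _)) (hexp hY _))]
  set ℓ := traceAddConjTranspose (m := Fin n) (𝕜 := ℂ)
  have inner (s t : ℝ) : deriv (fun u : ℝ => 2 * (Fintype.card (Fin n) : ℂ) -
      ℓ (exp (u • Z) * exp (s • X) * exp (t • Y))) 0 = -ℓ (Z * exp (s • X) * exp (t • Y)) := by
    simpa only [one_mul, mul_assoc] using
      ((hasDerivAt_mul_exp_smul_mul ℓ 1 Z _).const_sub _).deriv
  have middle (s : ℝ) : deriv (fun t : ℝ => -ℓ (Z * exp (s • X) * exp (t • Y))) 0 =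
      -ℓ (Z * exp (s • X) * Y) := by
    simpa only [mul_one] using (hasDerivAt_mul_exp_smul_mul ℓ (Z * exp (s • X)) Y 1).fun_neg.deriv
  have outer : deriv (fun s : ℝ => -ℓ (Z * exp (s • X) * Y)) 0 = -ℓ (Z * X * Y) :=
    (hasDerivAt_mul_exp_smul_mul ℓ Z X Y).fun_neg.deriv
  simp only [inner, middle, outer]
  rw [traceAddConjTranspose_mul_mul hX hY hZ]

/-- For the contrast function `F(U) = tr((1 − U)(1 − U)†)` on the unitary group `U(n)`,
one has `X^L Y^L Z^R F(I) = − tr([X,Y] Z)` for skew-Hermitian `X, Y, Z`, which shows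
that the induced connection is `∇^F_X Y = (1/2)[X,Y]`, the Levi-Civita connection of
the bi-invariant metric `g(X,Y) = −2 tr(XY)` on `u(n)`. -/
theorem contrast_unitary_connection (n : ℕ) (hn : 1 ≤ n)
    (X Y Z : Matrix (Fin n) (Fin n) ℂ) (hX : Xᴴ = -X) (hY : Yᴴ = -Y) (hZ : Zᴴ = -Z) :
    deriv (fun s : ℝ => deriv (fun t : ℝ => deriv (fun u : ℝ =>
        Matrix.trace
          ((1 - NormedSpace.exp (u • Z) * NormedSpace.exp (s • X) *
              NormedSpace.exp (t • Y)) *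
            (1 - NormedSpace.exp (u • Z) * NormedSpace.exp (s • X) *
              NormedSpace.exp (t • Y))ᴴ)) 0) 0) 0
      = -Matrix.trace ((X * Y - Y * X) * Z) :=
  contrast_unitary_connection_general n X Y Z hX hY hZ
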